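/- arXiv:math/0603221 — 3 statements merged into one kernel-verified Lean document; each statement's English description precedes it below -/
import Mathlib

section
/- (Variance lemma, λ case.) Let (X_t)_{t∈ℤ} be a strictly stationary, centered real-valued process with E|X_0|^m < ∞ for some m > 2, which is λ-weakly dependent. If Σ_{k=0}^∞ λ(k)^{(m−2)/(m−1)} < ∞, then the series σ² = Σ_{k∈ℤ} Cov(X_0, X_k) converges absolutely (in particular Σ_{k∈ℤ} |Cov(X_0, X_k)| < ∞). -/
/-! Truncate at level `T`: `U_t = clip T (X_t)` is a bounded 1-Lipschitz function of `X_t`, so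
λ-weak dependence (with `u = v = 1`) gives `|Cov(U_0, U_k)| ≤ (1 + 2T) λ(|k|)`, while the
`m`-th moment `M = E|X_0|^m` bounds the truncation error `|Cov(X_0, X_k) - Cov(U_0, U_k)|` by
`4M / T^(m-2)`; the centring of `X_0` is what makes `E U_0 = -E(X_0 - U_0)` small. Taking
`T = λ(|k|)^(-1/(m-1))` balances the two terms and gives
`|Cov(X_0, X_k)| ≤ C λ(|k|)^((m-2)/(m-1))`, which is summable over `k ∈ ℤ`. -/

open MeasureTheory Filter

section Defs

variable {Ω : Type*} [MeasurableSpace Ω]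

/-- Covariance of two real observables. -/
noncomputable def cov (μ : Measure Ω) (f g : Ω → ℝ) : ℝ :=
  ∫ ω, f ω * g ω ∂μ - (∫ ω, f ω ∂μ) * (∫ ω, g ω ∂μ)

/-- Strict stationarity of a real-valued process indexed by ℤ. -/
def IsStrictlyStationary (μ : Measure Ω) (X : ℤ → Ω → ℝ) : Prop :=
  ∀ (t : ℤ) (n : ℕ) (s : Fin n → ℤ),
    Measure.map (fun ω (i : Fin n) => X (s i + t) ω) μ
      = Measure.map (fun ω (i : Fin n) => X (s i) ω) μ

/-- `a` is a Lipschitz bound for `f` w.r.t. the ℓ¹ distance on tuples. -/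
def LipBound {u : ℕ} (f : (Fin u → ℝ) → ℝ) (a : ℝ) : Prop :=
  ∀ x y, |f x - f y| ≤ a * ∑ i, |x i - y i|

/-- (ε, ψ)-weak dependence in the sense of Doukhan and Louhichi. -/
def WeaklyDependent (μ : Measure Ω) (X : ℤ → Ω → ℝ)
    (ψ : ℕ → ℕ → ℝ → ℝ → ℝ) (ε : ℕ → ℝ) : Prop :=
  (∀ r, 0 ≤ ε r) ∧ Antitone ε ∧ Tendsto ε atTop (nhds 0) ∧
  ∀ (u v : ℕ), 0 < u → 0 < v →
  ∀ (r : ℕ) (s : Fin u → ℤ) (t : Fin v → ℤ),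
    Monotone s → Monotone t → (∀ i j, s i + (r : ℤ) ≤ t j) →
    ∀ (f : (Fin u → ℝ) → ℝ) (g : (Fin v → ℝ) → ℝ) (a b : ℝ),
      (∀ x, |f x| ≤ 1) → (∀ x, |g x| ≤ 1) →
      LipBound f a → LipBound g b → 0 ≤ a → 0 ≤ b →
      |cov μ (fun ω => f (fun i => X (s i) ω)) (fun ω => g (fun i => X (t i) ω))|
        ≤ ψ u v a b * ε r

/-- ψ for κ-weak dependence. -/
def kappaPsi : ℕ → ℕ → ℝ → ℝ → ℝ := fun u v a b => u * v * a * b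
/-- ψ for η-weak dependence. -/
def etaPsi : ℕ → ℕ → ℝ → ℝ → ℝ := fun u v a b => u * a + v * b
/-- ψ for λ-weak dependence. -/
def lambdaPsi : ℕ → ℕ → ℝ → ℝ → ℝ := fun u v a b => u * v * a * b + u * a + v * b

/-- Partial sums S_n = X_1 + ⋯ + X_n. -/
noncomputable def partialSum (X : ℤ → Ω → ℝ) (n : ℕ) (ω : Ω) : ℝ :=
  ∑ i ∈ Finset.Icc 1 n, X (i : ℤ) ω

/-- Convergence in distribution to the Gaussian law N(0, v). -/
def ConvToGaussian (μ : Measure Ω) (S : ℕ → Ω → ℝ) (v : NNReal) : Prop :=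
  ∀ φ : BoundedContinuousFunction ℝ ℝ,
    Tendsto (fun n => ∫ ω, φ (S n ω) ∂μ) atTop
      (nhds (∫ x, φ x ∂(ProbabilityTheory.gaussianReal 0 v)))

/-- Truncated input sequence (Y_{n-j} 1_{|j| ≤ I})_{j ∈ ℤ}. -/
noncomputable def truncSeq (Y : ℤ → Ω → ℝ) (n : ℤ) (I : ℕ) (ω : Ω) : ℤ → ℝ :=
  fun j => if |j| ≤ (I : ℤ) then Y (n - j) ω else 0

/-- Condition (★) with exponent ℓ and weights b. -/
def StarCondition (H : (ℤ → ℝ) → ℝ) (ℓ : ℝ) (b : ℤ → ℝ) : Prop :=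
  ∀ x y : ℤ → ℝ, (Function.support x).Finite → (Function.support y).Finite →
    ∀ s : ℤ, (∀ i, i ≠ s → x i = y i) →
      |H x - H y| ≤ b s * max ((⨆ i, |Function.update x s 0 i|) ^ ℓ) 1 * |x s - y s|

/-- `X n` is the L^p limit of the truncated Bernoulli shifts of `H` applied to `Y`. -/
def IsBernoulliShift (μ : Measure Ω) (Y : ℤ → Ω → ℝ) (H : (ℤ → ℝ) → ℝ)
    (p : ENNReal) (X : ℤ → Ω → ℝ) : Prop :=
  ∀ n : ℤ, MemLp (X n) p μ ∧
    Tendsto (fun I : ℕ => eLpNorm (fun ω => H (truncSeq Y n I ω) - X n ω) p μ)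
      atTop (nhds 0)

end Defs
open Asymptotics

open ProbabilityTheory

noncomputable def clip (T x : ℝ) : ℝ := max (-T) (min x T)

section Clip

variable {T m : ℝ}

lemma abs_clip_le (hT : 0 ≤ T) (x : ℝ) : |clip T x| ≤ T :=
  abs_le.2 ⟨le_max_left _ _, max_le (by linarith) (min_le_right _ _)⟩

lemma clip_eq_self {x : ℝ} (h : |x| ≤ T) : clip T x = x := by
  rw [abs_le] at h
  rw [clip, min_eq_left h.2, max_eq_right h.1]

lemma abs_clip_sub_clip_le (T x y : ℝ) : |clip T x - clip T y| ≤ |x - y| := by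
  refine (abs_max_sub_max_le_max _ _ _ _).trans (max_le (by simp) ?_)
  exact (abs_min_sub_min_le_max _ _ _ _).trans (by simp)

lemma measurable_clip (T : ℝ) : Measurable (clip T) := by
  unfold clip; fun_prop

lemma abs_sub_clip_le (hT : 0 ≤ T) (x : ℝ) : |x - clip T x| ≤ |x| := by
  unfold clip; grind

lemma rpow_le_rpow_div_rpow_sub {y a : ℝ} (hT : 0 < T) (hTy : T ≤ y) (ham : a ≤ m) :
    y ^ a ≤ y ^ m / T ^ (m - a) := by
  have hy : 0 < y := hT.trans_le hTy
  rw [le_div_iff₀ (by positivity), show y ^ m = y ^ a * y ^ (m - a) by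
    rw [← Real.rpow_add hy]; ring_nf]
  gcongr

lemma abs_sub_clip_rpow_le {a : ℝ} (hT : 0 < T) (ha : 0 < a) (ham : a ≤ m) (x : ℝ) :
    |x - clip T x| ^ a ≤ |x| ^ m / T ^ (m - a) := by
  rcases le_or_gt |x| T with h | h
  · rw [clip_eq_self h, sub_self, abs_zero, Real.zero_rpow ha.ne']
    positivity
  · calc |x - clip T x| ^ a ≤ |x| ^ a :=
        Real.rpow_le_rpow (abs_nonneg _) (abs_sub_clip_le hT.le x) ha.le
      _ ≤ |x| ^ m / T ^ (m - a) := rpow_le_rpow_div_rpow_sub hT h.le ham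

lemma abs_sub_clip_le_rpow_div (hT : 0 < T) (hm : 1 ≤ m) (x : ℝ) :
    |x - clip T x| ≤ |x| ^ m / T ^ (m - 1) := by
  simpa using abs_sub_clip_rpow_le hT one_pos hm x

lemma abs_mul_sub_clip_mul_clip_le (hT : 0 < T) (hm : 2 ≤ m) (x y : ℝ) :
    |x * y - clip T x * clip T y| ≤ 3 / 2 * (|x| ^ m + |y| ^ m) / T ^ (m - 2) := by
  have tail_mul (z : ℝ) : T * |z - clip T z| ≤ |z| ^ m / T ^ (m - 2) := by
    have h := abs_sub_clip_le_rpow_div hT (by linarith) z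
    rw [show m - 1 = m - 2 + 1 by ring, Real.rpow_add_one hT.ne', ← div_div,
      le_div_iff₀ hT] at h
    linarith
  have tail_sq (z : ℝ) : |z - clip T z| ^ 2 ≤ |z| ^ m / T ^ (m - 2) := by
    exact_mod_cast abs_sub_clip_rpow_le hT two_pos hm z
  calc |x * y - clip T x * clip T y|
      = |clip T x * (y - clip T y) + (x - clip T x) * clip T y
          + (x - clip T x) * (y - clip T y)| := by congr 1; ring
    _ ≤ |clip T x| * |y - clip T y| + |x - clip T x| * |clip T y|
          + |x - clip T x| * |y - clip T y| := by
      simpa only [abs_mul] using abs_add_three (clip T x * (y - clip T y))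
        ((x - clip T x) * clip T y) ((x - clip T x) * (y - clip T y))
    _ ≤ T * |y - clip T y| + |x - clip T x| * T
          + (|x - clip T x| ^ 2 + |y - clip T y| ^ 2) / 2 := by
      gcongr
      · exact abs_clip_le hT.le x
      · exact abs_clip_le hT.le y
      · nlinarith [two_mul_le_add_sq |x - clip T x| |y - clip T y|]
    _ ≤ 3 / 2 * (|x| ^ m + |y| ^ m) / T ^ (m - 2) := by
      rw [show 3 / 2 * (|x| ^ m + |y| ^ m) / T ^ (m - 2)
        = 3 / 2 * (|x| ^ m / T ^ (m - 2)) + 3 / 2 * (|y| ^ m / T ^ (m - 2)) by ring]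
      linarith [tail_mul x, tail_mul y, tail_sq x, tail_sq y]

end Clip

section Covariance

variable {Ω : Type*} [MeasurableSpace Ω] {μ : Measure Ω}

lemma cov_comm (f g : Ω → ℝ) : cov μ f g = cov μ g f := by
  simp only [cov, mul_comm]

lemma cov_div_const (f g : Ω → ℝ) (c : ℝ) :
    cov μ (fun ω => f ω / c) (fun ω => g ω / c) = cov μ f g / c ^ 2 := by
  simp only [cov, div_mul_div_comm, integral_div]
  ring

variable {Y Z : Ω → ℝ} {m T M : ℝ}

lemma integrable_sub_clip_comp (hY : Measurable Y) (hT : 0 < T) (hm : 1 ≤ m)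
    (hYm : Integrable (fun ω => |Y ω| ^ m) μ) :
    Integrable (fun ω => Y ω - clip T (Y ω)) μ :=
  (hYm.div_const _).mono' (hY.sub ((measurable_clip T).comp hY)).aestronglyMeasurable
    (ae_of_all _ fun ω => abs_sub_clip_le_rpow_div hT hm (Y ω))

lemma integrable_mul_sub_clip_mul_clip (hY : Measurable Y) (hZ : Measurable Z) (hT : 0 < T)
    (hm : 2 ≤ m) (hYm : Integrable (fun ω => |Y ω| ^ m) μ)
    (hZm : Integrable (fun ω => |Z ω| ^ m) μ) :
    Integrable (fun ω => Y ω * Z ω - clip T (Y ω) * clip T (Z ω)) μ :=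
  (((hYm.add hZm).const_mul _).div_const _).mono'
    ((hY.mul hZ).sub (((measurable_clip T).comp hY).mul
      ((measurable_clip T).comp hZ))).aestronglyMeasurable
    (ae_of_all _ fun ω => abs_mul_sub_clip_mul_clip_le hT hm (Y ω) (Z ω))

section Finite

variable [IsFiniteMeasure μ]

lemma integrable_clip_comp (hY : Measurable Y) (hT : 0 ≤ T) :
    Integrable (fun ω => clip T (Y ω)) μ :=
  .of_bound ((measurable_clip T).comp hY).aestronglyMeasurable T
    (ae_of_all _ fun ω => abs_clip_le hT (Y ω))

lemma abs_integral_clip_le (hY : Measurable Y) (hY0 : ∫ ω, Y ω ∂μ = 0) (hT : 0 < T)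
    (hm : 1 ≤ m) (hYm : Integrable (fun ω => |Y ω| ^ m) μ) :
    |∫ ω, clip T (Y ω) ∂μ| ≤ (∫ ω, |Y ω| ^ m ∂μ) / T ^ (m - 1) := by
  have hR := integrable_sub_clip_comp hY hT hm hYm
  have hU := integrable_clip_comp (μ := μ) hY hT.le
  have hYint : Integrable Y μ := by
    simpa only [Pi.add_def, sub_add_cancel] using hR.add hU
  rw [← integral_div, show ∫ ω, clip T (Y ω) ∂μ = -∫ ω, Y ω - clip T (Y ω) ∂μ by
    rw [integral_sub hYint hU, hY0, zero_sub, neg_neg], abs_neg]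
  exact abs_integral_le_integral_abs.trans
    (integral_mono hR.abs (hYm.div_const _) fun ω => abs_sub_clip_le_rpow_div hT hm (Y ω))

end Finite

lemma abs_integral_mul_sub_clip_mul_clip_le (hY : Measurable Y) (hZ : Measurable Z)
    (hT : 0 < T) (hm : 2 ≤ m) (hYm : Integrable (fun ω => |Y ω| ^ m) μ)
    (hZm : Integrable (fun ω => |Z ω| ^ m) μ) (hYM : ∫ ω, |Y ω| ^ m ∂μ ≤ M)
    (hZM : ∫ ω, |Z ω| ^ m ∂μ ≤ M) :
    |∫ ω, Y ω * Z ω - clip T (Y ω) * clip T (Z ω) ∂μ| ≤ 3 * M / T ^ (m - 2) := by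
  have hbound : Integrable (fun ω => 3 / 2 * (|Y ω| ^ m + |Z ω| ^ m) / T ^ (m - 2)) μ :=
    ((hYm.add hZm).const_mul _).div_const _
  refine abs_integral_le_integral_abs.trans ((integral_mono
    (integrable_mul_sub_clip_mul_clip hY hZ hT hm hYm hZm).abs hbound
    fun ω => abs_mul_sub_clip_mul_clip_le hT hm (Y ω) (Z ω)).trans ?_)
  rw [integral_div, integral_const_mul, integral_add hYm hZm]
  gcongr ?_ / _
  linarith

lemma abs_cov_sub_cov_clip_le [IsProbabilityMeasure μ] (hY : Measurable Y) (hZ : Measurable Z)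
    (hY0 : ∫ ω, Y ω ∂μ = 0) (hT : 0 < T) (hm : 2 ≤ m)
    (hYm : Integrable (fun ω => |Y ω| ^ m) μ) (hZm : Integrable (fun ω => |Z ω| ^ m) μ)
    (hYM : ∫ ω, |Y ω| ^ m ∂μ ≤ M) (hZM : ∫ ω, |Z ω| ^ m ∂μ ≤ M) :
    |cov μ Y Z - cov μ (fun ω => clip T (Y ω)) (fun ω => clip T (Z ω))|
      ≤ 4 * M / T ^ (m - 2) := by
  have hD := integrable_mul_sub_clip_mul_clip hY hZ hT hm hYm hZm
  have hUV : Integrable (fun ω => clip T (Y ω) * clip T (Z ω)) μ :=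
    (integrable_clip_comp hZ hT.le).bdd_mul ((measurable_clip T).comp hY).aestronglyMeasurable
      (ae_of_all _ fun ω => abs_clip_le hT.le (Y ω))
  have hYZ : Integrable (fun ω => Y ω * Z ω) μ := by
    simpa only [Pi.add_def, sub_add_cancel] using hD.add hUV
  have hsplit : cov μ Y Z - cov μ (fun ω => clip T (Y ω)) (fun ω => clip T (Z ω))
      = (∫ ω, Y ω * Z ω - clip T (Y ω) * clip T (Z ω) ∂μ)
        + (∫ ω, clip T (Y ω) ∂μ) * ∫ ω, clip T (Z ω) ∂μ := by
    rw [cov, cov, integral_sub hYZ hUV, hY0]; ring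
  have hprod := abs_integral_mul_sub_clip_mul_clip_le hY hZ hT hm hYm hZm hYM hZM
  have hU := abs_integral_clip_le hY hY0 hT (by linarith) hYm
  have hV : |∫ ω, clip T (Z ω) ∂μ| ≤ T := by
    simpa using norm_integral_le_of_norm_le_const (μ := μ) (f := fun ω => clip T (Z ω))
      (ae_of_all _ fun ω => (abs_clip_le hT.le (Z ω) : ‖clip T (Z ω)‖ ≤ T))
  calc |cov μ Y Z - cov μ (fun ω => clip T (Y ω)) (fun ω => clip T (Z ω))|
      ≤ 3 * M / T ^ (m - 2) + M / T ^ (m - 1) * T := by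
        rw [hsplit]
        refine (abs_add_le _ _).trans (add_le_add hprod ?_)
        rw [abs_mul]
        have hM : 0 ≤ M := (integral_nonneg fun ω => by positivity).trans hYM
        exact mul_le_mul (hU.trans (by gcongr)) hV (abs_nonneg _) (by positivity)
    _ = 4 * M / T ^ (m - 2) := by
      rw [show m - 1 = m - 2 + 1 by ring, Real.rpow_add_one hT.ne']
      field_simp
      ring

end Covariance

section WeakDependence

variable {Ω : Type*} [MeasurableSpace Ω] {μ : Measure Ω} {X : ℤ → Ω → ℝ}

lemma IsStrictlyStationary.identDistrib (hstat : IsStrictlyStationary μ X)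
    (hX : ∀ t, Measurable (X t)) (k : ℤ) : IdentDistrib (X k) (X 0) μ μ where
  aemeasurable_fst := (hX k).aemeasurable
  aemeasurable_snd := (hX 0).aemeasurable
  map_eq := by
    have h := congrArg (Measure.map fun x : Fin 1 → ℝ => x 0) (hstat k 1 fun _ => 0)
    rw [Measure.map_map (measurable_pi_apply 0) (measurable_pi_lambda _ fun _ => hX _),
      Measure.map_map (measurable_pi_apply 0) (measurable_pi_lambda _ fun _ => hX _)] at h
    simpa [Function.comp_def] using h

lemma WeaklyDependent.abs_cov_comp_le {ψ : ℕ → ℕ → ℝ → ℝ → ℝ} {ε : ℕ → ℝ}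
    (hdep : WeaklyDependent μ X ψ ε) {i j : ℤ} (hij : i ≤ j) {f g : ℝ → ℝ} {a b : ℝ}
    (hf : ∀ x, |f x| ≤ 1) (hg : ∀ x, |g x| ≤ 1) (hfa : ∀ x y, |f x - f y| ≤ a * |x - y|)
    (hgb : ∀ x y, |g x - g y| ≤ b * |x - y|) (ha : 0 ≤ a) (hb : 0 ≤ b) :
    |cov μ (fun ω => f (X i ω)) (fun ω => g (X j ω))| ≤ ψ 1 1 a b * ε (j - i).natAbs :=
  hdep.2.2.2 1 1 one_pos one_pos (j - i).natAbs (fun _ => i) (fun _ => j)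
    monotone_const monotone_const (fun _ _ => by omega) (fun v => f (v 0)) (fun v => g (v 0))
    a b (fun _ => hf _) (fun _ => hg _) (fun v w => by simpa using hfa (v 0) (w 0))
    (fun v w => by simpa using hgb (v 0) (w 0)) ha hb

lemma WeaklyDependent.abs_cov_clip_le {ε : ℕ → ℝ} (hdep : WeaklyDependent μ X lambdaPsi ε)
    {T : ℝ} (hT : 0 < T) (i j : ℤ) :
    |cov μ (fun ω => clip T (X i ω)) (fun ω => clip T (X j ω))|
      ≤ (1 + 2 * T) * ε (j - i).natAbs := by
  wlog hij : i ≤ j generalizing i j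
  · rw [cov_comm, ← Int.natAbs_neg, neg_sub]
    exact this j i (by omega)
  have hbdd (x : ℝ) : |clip T x / T| ≤ 1 := by
    rw [abs_div, abs_of_pos hT]
    exact div_le_one_of_le₀ (abs_clip_le hT.le x) hT.le
  have hlip (x y : ℝ) : |clip T x / T - clip T y / T| ≤ 1 / T * |x - y| := by
    rw [← sub_div, abs_div, abs_of_pos hT, one_div_mul_eq_div]
    exact div_le_div_of_nonneg_right (abs_clip_sub_clip_le T x y) hT.le
  have h := hdep.abs_cov_comp_le hij hbdd hbdd hlip hlip (by positivity) (by positivity)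
  rw [cov_div_const, abs_div, abs_of_pos (pow_pos hT 2), div_le_iff₀ (by positivity)] at h
  calc _ ≤ lambdaPsi 1 1 (1 / T) (1 / T) * ε (j - i).natAbs * T ^ 2 := h
    _ = (1 + 2 * T) * ε (j - i).natAbs := by
      simp only [lambdaPsi]
      field_simp
      ring

end WeakDependence

lemma nonpos_of_forall_le_div_rpow {c K p : ℝ} (hp : 0 < p) (h : ∀ T > 0, c ≤ K / T ^ p) :
    c ≤ 0 :=
  ge_of_tendsto (tendsto_const_nhds.div_atTop (tendsto_rpow_atTop hp))
    ((eventually_gt_atTop 0).mono h)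

lemma le_mul_rpow_of_forall_le_add_div_rpow {c L L₀ K m : ℝ} (hm : 2 < m) (hL : 0 ≤ L)
    (hLL₀ : L ≤ L₀) (h : ∀ T > 0, c ≤ (1 + 2 * T) * L + K / T ^ (m - 2)) :
    c ≤ (L₀ ^ (m - 1)⁻¹ + 2 + K) * L ^ ((m - 2) / (m - 1)) := by
  rcases hL.eq_or_lt with rfl | hL
  · rw [Real.zero_rpow (div_pos (by linarith) (by linarith)).ne', mul_zero]
    exact nonpos_of_forall_le_div_rpow (p := m - 2) (by linarith) fun T hT => by
      simpa using h T hT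
  set s := L ^ (m - 1)⁻¹
  have hs : 0 < s := by positivity
  have hLs : L = s * s ^ (m - 2) := by
    rw [← Real.rpow_one_add' hs.le (by linarith), show 1 + (m - 2) = m - 1 by ring,
      Real.rpow_inv_rpow hL.le (by linarith)]
  have hθ : L ^ ((m - 2) / (m - 1)) = s ^ (m - 2) := by
    rw [div_eq_inv_mul, Real.rpow_mul hL.le]
  have hsL₀ : s ≤ L₀ ^ (m - 1)⁻¹ := Real.rpow_le_rpow hL.le hLL₀ (by simp; linarith)
  calc c ≤ (1 + 2 * s⁻¹) * L + K / s⁻¹ ^ (m - 2) := h _ (inv_pos.2 hs)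
    _ = (s + 2 + K) * s ^ (m - 2) := by
      rw [Real.inv_rpow hs.le, hLs]
      field_simp
    _ ≤ _ := by
      rw [hθ]
      gcongr

theorem variance_lemma_lambda
    {Ω : Type*} [MeasurableSpace Ω] (μ : Measure Ω) [IsProbabilityMeasure μ]
    (X : ℤ → Ω → ℝ) (hmeas : ∀ t, Measurable (X t))
    (hstat : IsStrictlyStationary μ X)
    (hcent : ∫ ω, X 0 ω ∂μ = 0)
    (m : ℝ) (hm : 2 < m)
    (hmom : Integrable (fun ω => |X 0 ω| ^ m) μ)
    (lamCoef : ℕ → ℝ) (hdep : WeaklyDependent μ X lambdaPsi lamCoef)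
    (hsum : Summable (fun k : ℕ => lamCoef k ^ ((m - 2) / (m - 1)))) :
    Summable (fun k : ℤ => |cov μ (X 0) (X k)|) := by
  set M := ∫ ω, |X 0 ω| ^ m ∂μ
  have hlaw (k : ℤ) : IdentDistrib (fun ω => |X k ω| ^ m) (fun ω => |X 0 ω| ^ m) μ μ :=
    (hstat.identDistrib hmeas k).comp (by fun_prop : Measurable fun x : ℝ => |x| ^ m)
  have hbound (k : ℤ) : |cov μ (X 0) (X k)|
      ≤ (lamCoef 0 ^ (m - 1)⁻¹ + 2 + 4 * M) * lamCoef k.natAbs ^ ((m - 2) / (m - 1)) := by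
    refine le_mul_rpow_of_forall_le_add_div_rpow hm (hdep.1 _) (hdep.2.1 (Nat.zero_le _))
      fun T hT => ?_
    have htrunc := abs_cov_sub_cov_clip_le (hmeas 0) (hmeas k) hcent hT hm.le hmom
      ((hlaw k).integrable_iff.2 hmom) le_rfl (hlaw k).integral_eq.le
    have hclip := hdep.abs_cov_clip_le hT 0 k
    rw [sub_zero] at hclip
    linarith [abs_sub_abs_le_abs_sub (cov μ (X 0) (X k))
      (cov μ (fun ω => clip T (X 0 ω)) (fun ω => clip T (X k ω)))]
  have hsummable := hsum.mul_left (lamCoef 0 ^ (m - 1)⁻¹ + 2 + 4 * M)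
  exact .of_nonneg_of_le (fun _ => abs_nonneg _) hbound
    (.of_nat_of_neg (by simpa using hsummable) (by simpa using hsummable))
end

section
/- (Existence for Lipschitz Bernoulli shifts.) Let (Y_t)_{t∈ℤ} be a strictly stationary real-valued process with E|Y_0|^m < ∞ for some m ≥ 1, and let H: ℝ^(ℤ) → ℝ satisfy condition (★) with exponent ℓ = 0 and nonnegative weights (b_s)_{s∈ℤ} such that L = Σ_{j∈ℤ} b_j < ∞. Then for each n the limit X_n = lim_{I→∞} H((Y_{n−j} 1_{|j|≤I})_{j∈ℤ}) exists in L^m, the process (X_n)_{n∈ℤ} is strictly stationary with finite moments of order m, and ‖X_0 − H(0)‖_{L^m} ≤ (Σ_{j∈ℤ} b_j) ‖Y_0‖_{L^m}. -/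
open MeasureTheory Filter

section Defs

variable {Ω : Type*} [MeasurableSpace Ω]

/-- Strict stationarity of a real-valued process indexed by ℤ. -/
def IsStationaryProcess (μ : Measure Ω) (X : ℤ → Ω → ℝ) : Prop :=
  ∀ (t : ℤ) (n : ℕ) (s : Fin n → ℤ),
    Measure.map (fun ω (i : Fin n) => X (s i + t) ω) μ
      = Measure.map (fun ω (i : Fin n) => X (s i) ω) μ

end Defs

/-!
With ℓ = 0, condition (★) telescopes coordinate by coordinate: if two finitely supported inputs
differ only on a finite set F, then |H x - H y| ≤ ∑_{s ∈ F} b_s |x_s - y_s|. Applied to two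
truncations of the path of Y this gives |H_J - H_I| ≤ ∑_{I < |j| ≤ J} b_j |Y_{n-j}|. By
stationarity E|Y_{n-j}| = E|Y_0| < ∞, so the weighted series ∑_j b_j |Y_{n-j}| converges almost
surely and the truncations converge a.s.; by Minkowski the L^m norm of the right-hand side is at
most (∑_{I < |j| ≤ J} b_j) ‖Y_0‖_m, and Fatou's lemma turns the a.s. limit into an L^m limit with
the tail bound. The limit is a measurable, shift-equivariant function of the whole path of Y, so
it inherits stationarity from the law of that path, which is determined by the
finite-dimensional laws.
-/

open Topology ProbabilityTheory

noncomputable def window (I : ℕ) : Finset ℤ := Finset.Icc (-(I : ℤ)) I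

lemma mem_window {I : ℕ} {j : ℤ} : j ∈ window I ↔ |j| ≤ I := by
  rw [window, Finset.mem_Icc, abs_le]

lemma window_mono : Monotone window := fun I J hIJ j => by
  simp only [mem_window]
  exact fun h => h.trans (by exact_mod_cast hIJ)

lemma tendsto_window_atTop : Tendsto window atTop atTop :=
  tendsto_atTop_finset_of_monotone window_mono
    (fun j => ⟨j.natAbs, mem_window.2 (by simp)⟩)

lemma sum_le_tsum_compl {α : Type*} {c : α → ℝ} (hc : Summable c) (hc0 : 0 ≤ c)
    {F s : Finset α} (h : Disjoint F s) : ∑ j ∈ F, c j ≤ ∑' j : ↥(↑s : Set α)ᶜ, c j := by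
  have hF : ∑ j ∈ F, c j = ∑ j ∈ F, (↑s : Set α)ᶜ.indicator c j :=
    Finset.sum_congr rfl fun j hj => (Set.indicator_of_mem (Finset.disjoint_left.1 h hj) c).symm
  rw [hF, tsum_subtype]
  exact Summable.sum_le_tsum F (fun j _ => Set.indicator_nonneg (fun i _ => hc0 i) j)
    (hc.indicator _)

lemma tendsto_tsum_compl_window (c : ℤ → ℝ) :
    Tendsto (fun I => ∑' j : ↥(↑(window I) : Set ℤ)ᶜ, c j) atTop (𝓝 0) :=
  (tendsto_tsum_compl_atTop_zero c).comp tendsto_window_atTop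

lemma StarCondition.abs_sub_le_sum {H : (ℤ → ℝ) → ℝ} {b : ℤ → ℝ} (hstar : StarCondition H 0 b)
    {x y : ℤ → ℝ} (hy : y.support.Finite) (F : Finset ℤ)
    (hxy : ∀ j ∉ F, x j = y j) : |H x - H y| ≤ ∑ s ∈ F, b s * |x s - y s| := by
  classical
  induction F using Finset.induction_on generalizing y with
  | empty =>
    obtain rfl : x = y := funext fun j => hxy j (Finset.notMem_empty j)
    simp
  | @insert a F ha ih =>
    set z := Function.update y a (x a)
    have hza : z a = x a := Function.update_self _ _ _
    have hzy : ∀ i, i ≠ a → z i = y i := fun i hi => Function.update_of_ne hi _ _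
    have hz : z.support.Finite := (hy.union (Set.finite_singleton a)).subset fun i hi => by
      by_cases h : i = a
      · exact Or.inr h
      · exact Or.inl (by rwa [Function.mem_support, ← hzy i h])
    have hxz : |H x - H z| ≤ ∑ s ∈ F, b s * |x s - y s| := by
      refine (ih hz fun j hj => ?_).trans_eq (Finset.sum_congr rfl fun s hs => ?_)
      · by_cases h : j = a
        · rw [h, hza]
        · rw [hzy j h, hxy j (by simp [h, hj])]
      · rw [hzy s (ne_of_mem_of_not_mem hs ha)]
    have hzy' : |H z - H y| ≤ b a * |x a - y a| := by
      simpa [hza] using hstar z y hz hy a hzy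
    rw [Finset.sum_insert ha]
    linarith [abs_sub_le (H x) (H z) (H y)]

def truncPath (y : ℤ → ℝ) (n : ℤ) (s : Finset ℤ) : ℤ → ℝ :=
  fun j => if j ∈ s then y (n - j) else 0

lemma truncPath_support_finite (y : ℤ → ℝ) (n : ℤ) (s : Finset ℤ) :
    (truncPath y n s).support.Finite :=
  s.finite_toSet.subset fun j hj => by
    by_contra h
    exact hj (if_neg h)

lemma truncSeq_eq_truncPath {Ω : Type*} (Y : ℤ → Ω → ℝ) (n : ℤ) (I : ℕ) (ω : Ω) :
    truncSeq Y n I ω = truncPath (Y · ω) n (window I) := by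
  ext j
  simp only [truncSeq, truncPath, mem_window]

lemma StarCondition.abs_sub_truncPath_le {H : (ℤ → ℝ) → ℝ} {b : ℤ → ℝ}
    (hstar : StarCondition H 0 b) (y : ℤ → ℝ) (n : ℤ) {s t : Finset ℤ} (hst : s ⊆ t) :
    |H (truncPath y n t) - H (truncPath y n s)| ≤ ∑ j ∈ t \ s, b j * |y (n - j)| := by
  refine (hstar.abs_sub_le_sum (truncPath_support_finite y n s)
    (t \ s) fun j hj => ?_).trans_eq (Finset.sum_congr rfl fun j hj => ?_)
  · rw [Finset.mem_sdiff, not_and_not_right] at hj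
    by_cases hs : j ∈ s
    · simp [truncPath, hs, hst hs]
    · simp [truncPath, hs, mt hj hs]
  · rw [Finset.mem_sdiff] at hj
    simp [truncPath, hj.1, hj.2]

lemma truncPath_empty (y : ℤ → ℝ) (n : ℤ) : truncPath y n ∅ = 0 := by
  ext j
  simp [truncPath]

lemma truncPath_add (y : ℤ → ℝ) (k t : ℤ) (s : Finset ℤ) :
    truncPath y (k + t) s = truncPath (fun j => y (j + t)) k s := by
  ext j
  simp only [truncPath, add_sub_right_comm]

lemma measurable_truncPath (n : ℤ) (s : Finset ℤ) : Measurable fun y => truncPath y n s := by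
  refine measurable_pi_lambda _ fun j => ?_
  by_cases hj : j ∈ s
  · simpa [truncPath, hj] using measurable_pi_apply (n - j)
  · simp [truncPath, hj]

/-- A liminf rather than a limit, so that it is a measurable function of every path; it is the
limit wherever the weighted series `∑ j, b j * |y (n - j)|` converges. -/
noncomputable def bernoulliLimit (H : (ℤ → ℝ) → ℝ) (n : ℤ) (y : ℤ → ℝ) : ℝ :=
  liminf (fun I => H (truncPath y n (window I))) atTop

lemma measurable_bernoulliLimit {H : (ℤ → ℝ) → ℝ} (hH : Measurable H) (n : ℤ) :
    Measurable (bernoulliLimit H n) :=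
  Measurable.liminf fun I => hH.comp (measurable_truncPath n (window I))

lemma bernoulliLimit_add (H : (ℤ → ℝ) → ℝ) (k t : ℤ) (y : ℤ → ℝ) :
    bernoulliLimit H (k + t) y = bernoulliLimit H k (fun j => y (j + t)) := by
  simp only [bernoulliLimit, truncPath_add]

lemma tendsto_bernoulliLimit {H : (ℤ → ℝ) → ℝ} {b : ℤ → ℝ} (hstar : StarCondition H 0 b)
    (hb : 0 ≤ b) {y : ℤ → ℝ} {n : ℤ} (hsum : Summable fun j => b j * |y (n - j)|) :
    Tendsto (fun I => H (truncPath y n (window I))) atTop (𝓝 (bernoulliLimit H n y)) := by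
  have hcauchy : CauchySeq fun I => H (truncPath y n (window I)) := by
    refine cauchySeq_of_le_tendsto_0' _ (fun I J hIJ => ?_)
      (tendsto_tsum_compl_window fun j => b j * |y (n - j)|)
    rw [Real.dist_eq, abs_sub_comm]
    exact (hstar.abs_sub_truncPath_le y n (window_mono hIJ)).trans
      (sum_le_tsum_compl hsum (fun j => mul_nonneg (hb j) (abs_nonneg _)) Finset.sdiff_disjoint)
  obtain ⟨L, hL⟩ := cauchySeq_tendsto_of_complete hcauchy
  rwa [bernoulliLimit, hL.liminf_eq]

lemma eLpNorm_le_of_ae_tendsto {Ω E : Type*} [MeasurableSpace Ω] [NormedAddCommGroup E]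
    {μ : Measure Ω} {p : ENNReal} {f : ℕ → Ω → E} {g : Ω → E}
    (hf : ∀ n, AEStronglyMeasurable (f n) μ) (hlim : ∀ᵐ ω ∂μ, Tendsto (f · ω) atTop (𝓝 (g ω)))
    {D : ENNReal} (hD : ∀ᶠ n in atTop, eLpNorm (f n) p μ ≤ D) : eLpNorm g p μ ≤ D :=
  (Lp.eLpNorm_lim_le_liminf_eLpNorm hf g hlim).trans (liminf_le_of_frequently_le' hD.frequently)

section Stationary

variable {Ω : Type*} [MeasurableSpace Ω] {μ : Measure Ω} {Y : ℤ → Ω → ℝ}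

lemma IsStationaryProcess.map_restrict_shift (hmeas : ∀ t, Measurable (Y t))
    (hstat : IsStationaryProcess μ Y) (t : ℤ) (I : Finset ℤ) :
    μ.map (fun ω => I.restrict fun j => Y (j + t) ω) = μ.map (fun ω => I.restrict (Y · ω)) := by
  set e := (Fintype.equivFin I).symm
  set R := fun (v : Fin (Fintype.card I) → ℝ) (i : I) => v (e.symm i)
  have hR : Measurable R := by fun_prop
  have key := congrArg (Measure.map R) (hstat t _ fun k => (e k : ℤ))
  rw [Measure.map_map hR (by fun_prop), Measure.map_map hR (by fun_prop)] at key
  convert key using 2 <;> ext ω i <;> simp [R]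

lemma IsStationaryProcess.map_path_shift [IsFiniteMeasure μ] (hmeas : ∀ t, Measurable (Y t))
    (hstat : IsStationaryProcess μ Y) (t : ℤ) :
    μ.map (fun ω j => Y (j + t) ω) = μ.map (fun ω j => Y j ω) :=
  (map_eq_iff_forall_finset_map_restrict_eq (X := fun j ω => Y (j + t) ω) (Y := Y)
    (by fun_prop) (by fun_prop)).2 (hstat.map_restrict_shift hmeas t)

lemma IsStationaryProcess.identDistrib [IsFiniteMeasure μ] (hmeas : ∀ t, Measurable (Y t))
    (hstat : IsStationaryProcess μ Y) (t : ℤ) : IdentDistrib (Y t) (Y 0) μ μ := by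
  have hpath : IdentDistrib (fun ω j => Y (j + t) ω) (fun ω j => Y j ω) μ μ :=
    ⟨by fun_prop, by fun_prop, hstat.map_path_shift hmeas t⟩
  simpa [Function.comp_def] using hpath.comp (measurable_pi_apply 0)

lemma isStationaryProcess_of_path [IsFiniteMeasure μ] (hmeas : ∀ t, Measurable (Y t))
    (hstat : IsStationaryProcess μ Y) {Φ : ℤ → (ℤ → ℝ) → ℝ} (hΦ : ∀ n, Measurable (Φ n))
    (hshift : ∀ k t y, Φ (k + t) y = Φ k fun j => y (j + t)) :
    IsStationaryProcess μ fun n ω => Φ n (Y · ω) := by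
  intro t k s
  have hG : Measurable fun y (i : Fin k) => Φ (s i) y := measurable_pi_lambda _ fun i => hΦ _
  calc μ.map (fun ω i => Φ (s i + t) (Y · ω))
      = (μ.map fun ω j => Y (j + t) ω).map fun y i => Φ (s i) y := by
        rw [Measure.map_map hG (by fun_prop)]
        simp only [hshift, Function.comp_def]
    _ = μ.map (fun ω i => Φ (s i) (Y · ω)) := by
        rw [hstat.map_path_shift hmeas, Measure.map_map hG (by fun_prop)]
        rfl

end Stationary

section Moments

variable {Ω : Type*} [MeasurableSpace Ω] {μ : Measure Ω} [IsFiniteMeasure μ]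
  {Y : ℤ → Ω → ℝ} {b : ℤ → ℝ}

lemma eLpNorm_sum_mul_abs_le {p : ENNReal} (hp : 1 ≤ p) (hmeas : ∀ t, Measurable (Y t))
    (hstat : IsStationaryProcess μ Y) (hb : 0 ≤ b) (n : ℤ) (F : Finset ℤ) :
    eLpNorm (fun ω => ∑ j ∈ F, b j * |Y (n - j) ω|) p μ
      ≤ ENNReal.ofReal (∑ j ∈ F, b j) * eLpNorm (Y 0) p μ := by
  have hterm : ∀ j, eLpNorm (fun ω => b j * |Y (n - j) ω|) p μ
      = ENNReal.ofReal (b j) * eLpNorm (Y 0) p μ := fun j => by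
    change eLpNorm (b j • fun ω => ‖Y (n - j) ω‖) p μ = _
    rw [eLpNorm_const_smul, eLpNorm_norm, (hstat.identDistrib hmeas (n - j)).eLpNorm_eq,
      Real.enorm_eq_ofReal (hb j)]
  calc eLpNorm (fun ω => ∑ j ∈ F, b j * |Y (n - j) ω|) p μ
      = eLpNorm (∑ j ∈ F, fun ω => b j * |Y (n - j) ω|) p μ := by rw [Finset.sum_fn]
    _ ≤ ∑ j ∈ F, eLpNorm (fun ω => b j * |Y (n - j) ω|) p μ :=
        eLpNorm_sum_le (fun j _ => by fun_prop) hp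
    _ = ENNReal.ofReal (∑ j ∈ F, b j) * eLpNorm (Y 0) p μ := by
        rw [ENNReal.ofReal_sum_of_nonneg fun j _ => hb j, Finset.sum_mul]
        exact Finset.sum_congr rfl fun j _ => hterm j

lemma ae_summable_mul_abs (hmeas : ∀ t, Measurable (Y t)) (hstat : IsStationaryProcess μ Y)
    (hb : 0 ≤ b) (hL : Summable b) (hY : Integrable (Y 0) μ) (n : ℤ) :
    ∀ᵐ ω ∂μ, Summable fun j => b j * |Y (n - j) ω| := by
  have hterm : ∀ j, ∫⁻ ω, ENNReal.ofReal (b j * |Y (n - j) ω|) ∂μ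
      = ENNReal.ofReal (b j) * ∫⁻ ω, ‖Y 0 ω‖ₑ ∂μ := fun j => by
    simp_rw [ENNReal.ofReal_mul (hb j), ← Real.enorm_eq_ofReal_abs]
    rw [lintegral_const_mul _ (by fun_prop)]
    exact congrArg _ ((hstat.identDistrib hmeas (n - j)).comp measurable_enorm).lintegral_eq
  have hfin : ∫⁻ ω, ∑' j, ENNReal.ofReal (b j * |Y (n - j) ω|) ∂μ ≠ ⊤ := by
    rw [lintegral_tsum fun j => by fun_prop]
    simp_rw [hterm]
    rw [ENNReal.tsum_mul_right, ← ENNReal.ofReal_tsum_of_nonneg hb hL]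
    exact ENNReal.mul_ne_top ENNReal.ofReal_ne_top hY.2.ne
  filter_upwards [ae_lt_top' (by fun_prop) hfin] with ω hω
  exact (ENNReal.summable_toReal hω.ne).congr fun j =>
    ENNReal.toReal_ofReal (mul_nonneg (hb j) (abs_nonneg _))

end Moments

section BernoulliShift

variable {Ω : Type*} [MeasurableSpace Ω] {μ : Measure Ω} [IsFiniteMeasure μ] {Y : ℤ → Ω → ℝ}
  {H : (ℤ → ℝ) → ℝ} {b : ℤ → ℝ} {p : ENNReal}

lemma eLpNorm_bernoulliLimit_sub_le (hp : 1 ≤ p) (hmeas : ∀ t, Measurable (Y t))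
    (hstat : IsStationaryProcess μ Y) (hH : Measurable H) (hb : 0 ≤ b) (hL : Summable b)
    (hstar : StarCondition H 0 b) (hY : MemLp (Y 0) p μ) (n : ℤ) (s : Finset ℤ) :
    eLpNorm (fun ω => bernoulliLimit H n (Y · ω) - H (truncPath (Y · ω) n s)) p μ
      ≤ ENNReal.ofReal (∑' j : ↥(↑s : Set ℤ)ᶜ, b j) * eLpNorm (Y 0) p μ := by
  have hpath : Measurable fun ω j => Y j ω := measurable_pi_lambda _ hmeas
  have htrunc : ∀ s, Measurable fun ω => H (truncPath (Y · ω) n s) := fun s =>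
    hH.comp ((measurable_truncPath n s).comp hpath)
  refine eLpNorm_le_of_ae_tendsto
    (f := fun I ω => H (truncPath (Y · ω) n (window I)) - H (truncPath (Y · ω) n s))
    (fun I => ((htrunc _).sub (htrunc s)).aestronglyMeasurable) ?_ ?_
  · filter_upwards [ae_summable_mul_abs hmeas hstat hb hL (hY.integrable hp) n] with ω hω
    exact (tendsto_bernoulliLimit (y := (Y · ω)) hstar hb hω).sub_const _
  · filter_upwards [tendsto_window_atTop.eventually_ge_atTop s] with I hI
    calc eLpNorm (fun ω => H (truncPath (Y · ω) n (window I)) - H (truncPath (Y · ω) n s)) p μ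
        ≤ eLpNorm (fun ω => ∑ j ∈ window I \ s, b j * |Y (n - j) ω|) p μ :=
          eLpNorm_mono_real fun ω => hstar.abs_sub_truncPath_le _ n hI
      _ ≤ ENNReal.ofReal (∑ j ∈ window I \ s, b j) * eLpNorm (Y 0) p μ :=
          eLpNorm_sum_mul_abs_le hp hmeas hstat hb n _
      _ ≤ ENNReal.ofReal (∑' j : ↥(↑s : Set ℤ)ᶜ, b j) * eLpNorm (Y 0) p μ := by
          gcongr
          exact sum_le_tsum_compl hL hb Finset.sdiff_disjoint

lemma eLpNorm_bernoulliLimit_sub_zero_le (hp : 1 ≤ p) (hmeas : ∀ t, Measurable (Y t))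
    (hstat : IsStationaryProcess μ Y) (hH : Measurable H) (hb : 0 ≤ b) (hL : Summable b)
    (hstar : StarCondition H 0 b) (hY : MemLp (Y 0) p μ) (n : ℤ) :
    eLpNorm (fun ω => bernoulliLimit H n (Y · ω) - H 0) p μ
      ≤ ENNReal.ofReal (∑' j, b j) * eLpNorm (Y 0) p μ := by
  simpa [truncPath_empty, tsum_subtype] using
    eLpNorm_bernoulliLimit_sub_le hp hmeas hstat hH hb hL hstar hY n ∅

lemma memLp_bernoulliLimit (hp : 1 ≤ p) (hmeas : ∀ t, Measurable (Y t))
    (hstat : IsStationaryProcess μ Y) (hH : Measurable H) (hb : 0 ≤ b) (hL : Summable b)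
    (hstar : StarCondition H 0 b) (hY : MemLp (Y 0) p μ) (n : ℤ) :
    MemLp (fun ω => bernoulliLimit H n (Y · ω)) p μ := by
  have hmeasX : Measurable fun ω => bernoulliLimit H n (Y · ω) :=
    (measurable_bernoulliLimit hH n).comp (measurable_pi_lambda _ hmeas)
  have hcentered : MemLp (fun ω => bernoulliLimit H n (Y · ω) - H 0) p μ :=
    ⟨(hmeasX.sub_const _).aestronglyMeasurable,
      (eLpNorm_bernoulliLimit_sub_zero_le hp hmeas hstat hH hb hL hstar hY n).trans_lt
        (ENNReal.mul_lt_top ENNReal.ofReal_lt_top hY.2)⟩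
  convert hcentered.add (memLp_const (H 0)) using 1
  ext ω
  simp

lemma tendsto_eLpNorm_truncSeq_sub_bernoulliLimit (hp : 1 ≤ p) (hmeas : ∀ t, Measurable (Y t))
    (hstat : IsStationaryProcess μ Y) (hH : Measurable H) (hb : 0 ≤ b) (hL : Summable b)
    (hstar : StarCondition H 0 b) (hY : MemLp (Y 0) p μ) (n : ℤ) :
    Tendsto (fun I => eLpNorm (fun ω => H (truncSeq Y n I ω) - bernoulliLimit H n (Y · ω)) p μ)
      atTop (𝓝 0) := by
  have htail : Tendsto (fun I => ENNReal.ofReal (∑' j : ↥(↑(window I) : Set ℤ)ᶜ, b j)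
      * eLpNorm (Y 0) p μ) atTop (𝓝 0) := by
    simpa using ENNReal.Tendsto.mul_const (ENNReal.tendsto_ofReal (tendsto_tsum_compl_window b))
      (Or.inr hY.2.ne)
  refine tendsto_of_tendsto_of_tendsto_of_le_of_le tendsto_const_nhds htail (fun _ => bot_le)
    fun I => (eLpNorm_sub_comm _ _ p μ).trans_le ?_
  simp only [truncSeq_eq_truncPath]
  exact eLpNorm_bernoulliLimit_sub_le hp hmeas hstat hH hb hL hstar hY n (window I)

end BernoulliShift

theorem bernoulli_shift_exists_lipschitz
    {Ω : Type*} [MeasurableSpace Ω] (μ : Measure Ω) [IsProbabilityMeasure μ]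
    (Y : ℤ → Ω → ℝ) (hmeas : ∀ t, Measurable (Y t))
    (hstat : IsStationaryProcess μ Y)
    (H : (ℤ → ℝ) → ℝ) (hH : Measurable H)
    (bw : ℤ → ℝ) (hbw : ∀ s, 0 ≤ bw s)
    (hstar : StarCondition H 0 bw)
    (hL : Summable bw)
    (m : ℝ) (hm : 1 ≤ m)
    (hmom : Integrable (fun ω => |Y 0 ω| ^ m) μ) :
    ∃ X : ℤ → Ω → ℝ,
      IsBernoulliShift μ Y H (ENNReal.ofReal m) X ∧
      IsStationaryProcess μ X ∧
      eLpNorm (fun ω => X 0 ω - H (fun _ => 0)) (ENNReal.ofReal m) μ ≤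
        ENNReal.ofReal (∑' j : ℤ, bw j) * eLpNorm (Y 0) (ENNReal.ofReal m) μ := by
  have hp : 1 ≤ ENNReal.ofReal m := ENNReal.one_le_ofReal.2 hm
  have hY : MemLp (Y 0) (ENNReal.ofReal m) μ := by
    refine (integrable_norm_rpow_iff (hmeas 0).aestronglyMeasurable (by positivity)
      ENNReal.ofReal_ne_top).1 ?_
    simpa [ENNReal.toReal_ofReal (zero_le_one.trans hm)] using hmom
  exact ⟨fun n ω => bernoulliLimit H n (Y · ω),
    fun n => ⟨memLp_bernoulliLimit hp hmeas hstat hH hbw hL hstar hY n,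
      tendsto_eLpNorm_truncSeq_sub_bernoulliLimit hp hmeas hstat hH hbw hL hstar hY n⟩,
    isStationaryProcess_of_path hmeas hstat (measurable_bernoulliLimit hH) (bernoulliLimit_add H),
    eLpNorm_bernoulliLimit_sub_zero_le hp hmeas hstat hH hbw hL hstar hY 0⟩
end

section
/- (Existence for non-Lipschitz Bernoulli shifts.) Let (Y_t)_{t∈ℤ} be a strictly stationary real-valued process and H: ℝ^(ℤ) → ℝ satisfy condition (★) with exponent ℓ > 0 and nonnegative weights (b_j)_{j∈ℤ} with Σ_{j∈ℤ} |j| b_j < ∞. Assume E|Y_0|^{m'} < ∞ for real numbers m, m' with m ≥ 1 and m' ≥ (ℓ+1)m. Then for each n the limit X_n = lim_{I→∞} H((Y_{n−j} 1_{|j|≤I})_{j∈ℤ}) exists in L^m and the process (X_n)_{n∈ℤ} is strictly stationary with finite moments of order m. -/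
open MeasureTheory Filter

open Asymptotics

/-!
Write `G_I = H((Y_{n-j} 1_{|j| ≤ I})_j)`. Passing from `G_I` to `G_{I+1}` changes the two
coordinates `±(I+1)`, so applying (★) twice bounds `|G_{I+1} - G_I|` by
`(b_{I+1} + b_{-(I+1)}) K^{ℓ+1}` with `K = max(1, max_{|j| ≤ I+1} |Y_{n-j}|)`.
Since `m (ℓ+1) ≤ m'` and `E K^{m'} ≤ 1 + (2I+3) E|Y_0|^{m'}` by stationarity, the `L^m` norms
of the increments are summable thanks to `∑ |j| b_j < ∞`. Such a sequence converges both almost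
surely and in `L^m`. Each truncated process `(G_I(n))_n` is a fixed measurable function of a finite
window of `Y`, hence stationary, and almost sure limits of stationary processes are stationary.
-/
open scoped ENNReal Topology
open Function

section SummableIncrements

variable {α E : Type*} [MeasurableSpace α] {μ : Measure α} [NormedAddCommGroup E]
  {p : ℝ≥0∞} {f : ℕ → α → E}

lemma eLpNorm_sub_le_sum_range (hf : ∀ n, AEStronglyMeasurable (f n) μ) (hp : 1 ≤ p)
    (J k : ℕ) :
    eLpNorm (f (k + J) - f J) p μ
      ≤ ∑ i ∈ Finset.range k, eLpNorm (f (i + J + 1) - f (i + J)) p μ := by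
  induction k with
  | zero => simp
  | succ k ih =>
    calc eLpNorm (f (k + 1 + J) - f J) p μ
        = eLpNorm ((f (k + J) - f J) + (f (k + J + 1) - f (k + J))) p μ := by
          rw [sub_add_sub_cancel', add_right_comm]
      _ ≤ eLpNorm (f (k + J) - f J) p μ + eLpNorm (f (k + J + 1) - f (k + J)) p μ :=
          eLpNorm_add_le ((hf _).sub (hf _)) ((hf _).sub (hf _)) hp
      _ ≤ _ := by rw [Finset.sum_range_succ]; gcongr

lemma eLpNorm_sub_le_tsum (hf : ∀ n, AEStronglyMeasurable (f n) μ) (hp : 1 ≤ p)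
    {J K : ℕ} (hJK : J ≤ K) :
    eLpNorm (f K - f J) p μ ≤ ∑' i, eLpNorm (f (i + J + 1) - f (i + J)) p μ := by
  obtain ⟨k, rfl⟩ := Nat.exists_eq_add_of_le' hJK
  exact (eLpNorm_sub_le_sum_range hf hp J k).trans (ENNReal.sum_le_tsum _)

lemma ae_summable_sub_of_tsum_eLpNorm_ne_top [CompleteSpace E] [IsProbabilityMeasure μ]
    (hf : ∀ n, AEStronglyMeasurable (f n) μ) (hp : 1 ≤ p)
    (hsum : ∑' i, eLpNorm (f (i + 1) - f i) p μ ≠ ∞) :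
    ∀ᵐ x ∂μ, Summable fun i => f (i + 1) x - f i x := by
  have hΔ : ∀ i, AEStronglyMeasurable (f (i + 1) - f i) μ := fun i => (hf _).sub (hf i)
  have hint : ∫⁻ x, ∑' i, ‖f (i + 1) x - f i x‖ₑ ∂μ ≠ ∞ := by
    refine ne_top_of_le_ne_top hsum ?_
    rw [lintegral_tsum (f := fun i x => ‖f (i + 1) x - f i x‖ₑ) fun i => (hΔ i).enorm]
    refine ENNReal.tsum_le_tsum fun i => ?_
    rw [← eLpNorm_one_eq_lintegral_enorm]
    exact eLpNorm_le_eLpNorm_of_exponent_le hp (hΔ i)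
  filter_upwards [ae_lt_top' (AEMeasurable.tsum fun i => (hΔ i).enorm) hint] with x hx
  exact .of_nnnorm <| ENNReal.tsum_coe_ne_top_iff_summable.mp hx.ne

lemma exists_tendsto_of_tsum_eLpNorm_sub_ne_top [CompleteSpace E] [IsProbabilityMeasure μ]
    (hf₀ : MemLp (f 0) p μ) (hf : ∀ n, AEStronglyMeasurable (f n) μ) (hp : 1 ≤ p)
    (hsum : ∑' i, eLpNorm (f (i + 1) - f i) p μ ≠ ∞) :
    ∃ g : α → E, MemLp g p μ ∧ (∀ᵐ x ∂μ, Tendsto (f · x) atTop (𝓝 (g x))) ∧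
      Tendsto (fun n => eLpNorm (f n - g) p μ) atTop (𝓝 0) := by
  have hconv : ∀ᵐ x ∂μ, ∃ l, Tendsto (f · x) atTop (𝓝 l) := by
    filter_upwards [ae_summable_sub_of_tsum_eLpNorm_ne_top hf hp hsum] with x hx
    have h := hx.hasSum.tendsto_sum_nat.add_const (f 0 x)
    simp only [Finset.sum_range_sub (f · x), sub_add_cancel] at h
    exact ⟨_, h⟩
  obtain ⟨g, hgm, hlim⟩ := exists_stronglyMeasurable_limit_of_tendsto_ae hf hconv
  have htail : ∀ J, eLpNorm (f J - g) p μ ≤ ∑' i, eLpNorm (f (i + J + 1) - f (i + J)) p μ := by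
    intro J
    refine Lp.eLpNorm_le_of_ae_tendsto (u := atTop) (f := fun K => f J - f K)
      (eventually_atTop.2 ⟨J, fun K hK => ?_⟩) (fun K => (hf J).sub (hf K)) ?_
    · rw [eLpNorm_sub_comm]; exact eLpNorm_sub_le_tsum hf hp hK
    · filter_upwards [hlim] with x hx using tendsto_const_nhds.sub hx
  have hg : MemLp g p μ := by
    have h₀ : MemLp (f 0 - g) p μ :=
      ⟨(hf 0).sub hgm.aestronglyMeasurable, (htail 0).trans_lt (by simpa using hsum.lt_top)⟩
    simpa using hf₀.sub h₀
  refine ⟨g, hg, hlim, ?_⟩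
  exact tendsto_of_tendsto_of_tendsto_of_le_of_le tendsto_const_nhds
    (ENNReal.tendsto_sum_nat_add _ hsum) (fun _ => zero_le) htail

end SummableIncrements

section Stationarity

variable {Ω : Type*} [MeasurableSpace Ω] {μ : Measure Ω} {Y : ℤ → Ω → ℝ}

lemma IsStrictlyStationary.map_eq_of_fintype (hmeas : ∀ t, Measurable (Y t))
    (hstat : IsStrictlyStationary μ Y) {ι : Type*} [Fintype ι] (s : ι → ℤ) (t : ℤ) :
    μ.map (fun ω i => Y (s i + t) ω) = μ.map (fun ω i => Y (s i) ω) := by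
  let e := Fintype.equivFin ι
  have he : Measurable fun (v : Fin (Fintype.card ι) → ℝ) (i : ι) => v (e i) := by fun_prop
  have hcomp : ∀ c : ℤ, (fun ω i => Y (s i + c) ω)
      = (fun v i => v (e i)) ∘ fun ω k => Y ((s ∘ e.symm) k + c) ω := by
    intro c; funext ω i; simp
  have h := hstat t _ (s ∘ e.symm)
  rw [hcomp t, ← Measure.map_map he (by fun_prop), h, Measure.map_map he (by fun_prop)]
  simpa using congrArg (μ.map ·) (hcomp 0).symm

lemma IsStrictlyStationary.comp_window (hmeas : ∀ t, Measurable (Y t))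
    (hstat : IsStrictlyStationary μ Y) {ι : Type*} [Fintype ι] (d : ι → ℤ)
    {F : (ι → ℝ) → ℝ} (hF : Measurable F) :
    IsStrictlyStationary μ (fun n ω => F (fun k => Y (n - d k) ω)) := by
  intro t u s
  let Φ : (Fin u × ι → ℝ) → Fin u → ℝ := fun w i => F fun k => w (i, k)
  have hΦ : Measurable Φ := by fun_prop
  have hcomp : ∀ c : ℤ, (fun ω (i : Fin u) => F fun k => Y (s i + c - d k) ω)
      = Φ ∘ fun ω q => Y ((s q.1 - d q.2) + c) ω := by
    intro c; funext ω i; simp only [Φ, comp_apply, sub_add_eq_add_sub]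
  rw [hcomp t, ← Measure.map_map hΦ (by fun_prop),
    hstat.map_eq_of_fintype hmeas (fun q : Fin u × ι => s q.1 - d q.2) t,
    Measure.map_map hΦ (by fun_prop)]
  simpa using congrArg (μ.map ·) (hcomp 0).symm

end Stationarity

section Truncation

variable {Ω : Type*}

noncomputable def extendByZero (s : Finset ℤ) (v : s → ℝ) : ℤ → ℝ :=
  fun j => if h : j ∈ s then v ⟨j, h⟩ else 0

lemma measurable_extendByZero (s : Finset ℤ) : Measurable (extendByZero s) := by
  refine measurable_pi_lambda _ fun j => ?_
  by_cases h : j ∈ s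
  · simpa [extendByZero, h] using measurable_pi_apply _
  · simp [extendByZero, h]

lemma truncSeq_eq_extendByZero (Y : ℤ → Ω → ℝ) (n : ℤ) (I : ℕ) (ω : Ω) :
    truncSeq Y n I ω = extendByZero (Finset.Icc (-(I : ℤ)) I) fun k => Y (n - k) ω := by
  funext j
  simp [truncSeq, extendByZero, abs_le]

lemma finite_support_truncSeq (Y : ℤ → Ω → ℝ) (n : ℤ) (I : ℕ) (ω : Ω) :
    (support (truncSeq Y n I ω)).Finite := by
  refine (Set.finite_Icc (-(I : ℤ)) I).subset fun j hj => ?_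
  by_contra h
  simp_all [truncSeq, abs_le]

variable [MeasurableSpace Ω] {μ : Measure Ω} {Y : ℤ → Ω → ℝ}

lemma measurable_truncSeq (hmeas : ∀ t, Measurable (Y t)) (n : ℤ) (I : ℕ) :
    Measurable (truncSeq Y n I) := by
  rw [funext (truncSeq_eq_extendByZero Y n I)]
  exact (measurable_extendByZero _).comp (measurable_pi_lambda _ fun k => hmeas _)

lemma IsStrictlyStationary.comp_truncSeq (hmeas : ∀ t, Measurable (Y t))
    (hstat : IsStrictlyStationary μ Y) {H : (ℤ → ℝ) → ℝ} (hH : Measurable H) (I : ℕ) :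
    IsStrictlyStationary μ (fun n ω => H (truncSeq Y n I ω)) := by
  simp_rw [truncSeq_eq_extendByZero]
  exact hstat.comp_window hmeas Subtype.val (hH.comp (measurable_extendByZero _))

end Truncation

section Limits

variable {Ω : Type*} [MeasurableSpace Ω] {μ : Measure Ω} [IsProbabilityMeasure μ]

lemma map_eq_of_tendsto_ae {E : Type*} [TopologicalSpace E] [MeasurableSpace E] [BorelSpace E]
    [HasOuterApproxClosed E] {F G : ℕ → Ω → E} {F' G' : Ω → E}
    (hF : ∀ I, AEMeasurable (F I) μ) (hG : ∀ I, AEMeasurable (G I) μ)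
    (hF' : AEMeasurable F' μ) (hG' : AEMeasurable G' μ)
    (hFlim : ∀ᵐ ω ∂μ, Tendsto (F · ω) atTop (𝓝 (F' ω)))
    (hGlim : ∀ᵐ ω ∂μ, Tendsto (G · ω) atTop (𝓝 (G' ω)))
    (hmap : ∀ I, μ.map (F I) = μ.map (G I)) :
    μ.map F' = μ.map G' := by
  have h₁ := tendstoInDistribution_of_ae_tendsto hF hF' hFlim
  have h₂ := tendstoInDistribution_of_ae_tendsto hG hG' hGlim
  refine tendstoInDistribution_unique F h₁ ⟨hF, hG', ?_⟩
  simpa only [hmap] using h₂.tendsto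

lemma isStrictlyStationary_of_tendsto_ae {G : ℕ → ℤ → Ω → ℝ} {X : ℤ → Ω → ℝ}
    (hG : ∀ I, IsStrictlyStationary μ (G I)) (hGm : ∀ I n, AEMeasurable (G I n) μ)
    (hX : ∀ n, AEMeasurable (X n) μ)
    (hlim : ∀ n, ∀ᵐ ω ∂μ, Tendsto (G · n ω) atTop (𝓝 (X n ω))) :
    IsStrictlyStationary μ X := by
  intro t u s
  have hvec : ∀ c : ℤ, ∀ᵐ ω ∂μ,
      Tendsto (fun I (i : Fin u) => G I (s i + c) ω) atTop (𝓝 fun i => X (s i + c) ω) := by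
    intro c
    filter_upwards [ae_all_iff.2 fun i : Fin u => hlim (s i + c)] with ω hω
    exact tendsto_pi_nhds.2 hω
  have h0 := hvec 0
  simp only [add_zero] at h0
  exact map_eq_of_tendsto_ae (fun I => by fun_prop) (fun I => by fun_prop) (by fun_prop)
    (by fun_prop) (hvec t) h0 fun I => hG I t u s

end Limits

section Star

lemma finite_support_update_zero {x : ℤ → ℝ} (hx : (support x).Finite) (s : ℤ) :
    (support (update x s 0)).Finite := hx.subset fun i hi => by
  rcases eq_or_ne i s with rfl | h
  · simp at hi
  · simpa [update_of_ne h] using hi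

lemma abs_update_zero_le {x : ℤ → ℝ} {K : ℝ} (hxK : ∀ i, |x i| ≤ K) (s i : ℤ) :
    |update x s 0 i| ≤ K := by
  rcases eq_or_ne i s with rfl | h
  · simpa using (abs_nonneg _).trans (hxK i)
  · simpa [update_of_ne h] using hxK i

lemma StarCondition.abs_sub_update_zero_le {H : (ℤ → ℝ) → ℝ} {ℓ : ℝ} {b : ℤ → ℝ}
    (hstar : StarCondition H ℓ b) (hℓ : 0 ≤ ℓ) {s : ℤ} (hb : 0 ≤ b s) {x : ℤ → ℝ}
    (hx : (support x).Finite) {K : ℝ} (hK : 1 ≤ K) (hxK : ∀ i, |x i| ≤ K) :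
    |H x - H (update x s 0)| ≤ b s * K ^ (ℓ + 1) := by
  have hmax : max ((⨆ i, |update x s 0 i|) ^ ℓ) 1 ≤ K ^ ℓ :=
    max_le (Real.rpow_le_rpow (Real.iSup_nonneg fun _ => abs_nonneg _)
      (ciSup_le (abs_update_zero_le hxK s)) hℓ) (Real.one_le_rpow hK hℓ)
  calc |H x - H (update x s 0)|
      ≤ b s * max ((⨆ i, |update x s 0 i|) ^ ℓ) 1 * |x s - update x s 0 s| :=
        hstar x _ hx (finite_support_update_zero hx s) s fun i hi => (update_of_ne hi 0 x).symm
    _ ≤ b s * K ^ ℓ * K := by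
        gcongr
        simpa using hxK s
    _ = b s * K ^ (ℓ + 1) := by rw [Real.rpow_add_one (by positivity), mul_assoc]

end Star

section LocalMax

variable {Ω : Type*} (Y : ℤ → Ω → ℝ) (n : ℤ) (I : ℕ) (ω : Ω)

noncomputable def localMax : ℝ :=
  max 1 ((Finset.Icc (-(I : ℤ)) I).sup' (Finset.nonempty_Icc.2 (neg_le_self I.cast_nonneg))
    fun j => |Y (n - j) ω|)

lemma one_le_localMax : 1 ≤ localMax Y n I ω := le_max_left _ _

lemma abs_le_localMax {j : ℤ} (hj : |j| ≤ I) : |Y (n - j) ω| ≤ localMax Y n I ω :=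
  (Finset.le_sup' (fun j => |Y (n - j) ω|) (Finset.mem_Icc.2 (abs_le.1 hj))).trans
    (le_max_right _ _)

lemma abs_truncSeq_le_localMax {J : ℕ} (hJ : J ≤ I) (j : ℤ) :
    |truncSeq Y n J ω j| ≤ localMax Y n I ω := by
  unfold truncSeq
  split_ifs with hj
  · exact abs_le_localMax Y n I ω (hj.trans (by exact_mod_cast hJ))
  · simpa using zero_le_one.trans (one_le_localMax Y n I ω)

lemma localMax_rpow_le (q : ℝ) :
    localMax Y n I ω ^ q ≤ 1 + ∑ j ∈ Finset.Icc (-(I : ℤ)) I, |Y (n - j) ω| ^ q := by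
  obtain ⟨j₀, hj₀, hsup⟩ := Finset.exists_mem_eq_sup'
    (Finset.nonempty_Icc.2 (neg_le_self I.cast_nonneg)) fun j => |Y (n - j) ω|
  have hsum : 0 ≤ ∑ j ∈ Finset.Icc (-(I : ℤ)) I, |Y (n - j) ω| ^ q :=
    Finset.sum_nonneg fun j _ => by positivity
  rw [localMax, hsup]
  rcases le_total 1 |Y (n - j₀) ω| with h | h
  · rw [max_eq_right h]
    exact (Finset.single_le_sum (f := fun j => |Y (n - j) ω| ^ q)
      (fun j _ => by positivity) hj₀).trans (le_add_of_nonneg_left zero_le_one)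
  · rw [max_eq_left h, Real.one_rpow]
    exact le_add_of_nonneg_right hsum

lemma truncSeq_succ_update_update :
    update (update (truncSeq Y n (I + 1) ω) ((I : ℤ) + 1) 0) (-((I : ℤ) + 1)) 0
      = truncSeq Y n I ω := by
  funext j
  simp only [update_apply, truncSeq, abs_le]
  split_ifs <;> first | rfl | omega

end LocalMax

section TruncationIncrements

variable {Ω : Type*} {H : (ℤ → ℝ) → ℝ} {ℓ : ℝ} {b : ℤ → ℝ}

lemma StarCondition.abs_sub_truncSeq_succ_le (hstar : StarCondition H ℓ b) (hℓ : 0 ≤ ℓ)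
    (hb : ∀ s, 0 ≤ b s) (Y : ℤ → Ω → ℝ) (n : ℤ) (I : ℕ) (ω : Ω) :
    |H (truncSeq Y n (I + 1) ω) - H (truncSeq Y n I ω)|
      ≤ (b ((I : ℤ) + 1) + b (-((I : ℤ) + 1))) * localMax Y n (I + 1) ω ^ (ℓ + 1) := by
  set x := truncSeq Y n (I + 1) ω
  set x' := update x ((I : ℤ) + 1) 0
  have hK := one_le_localMax Y n (I + 1) ω
  have hx : ∀ j, |x j| ≤ localMax Y n (I + 1) ω := abs_truncSeq_le_localMax Y n _ ω le_rfl
  have hx₀ := finite_support_truncSeq Y n (I + 1) ω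
  rw [← truncSeq_succ_update_update]
  calc |H x - H (update x' (-((I : ℤ) + 1)) 0)|
      ≤ |H x - H x'| + |H x' - H (update x' (-((I : ℤ) + 1)) 0)| := abs_sub_le _ _ _
    _ ≤ b ((I : ℤ) + 1) * localMax Y n (I + 1) ω ^ (ℓ + 1)
        + b (-((I : ℤ) + 1)) * localMax Y n (I + 1) ω ^ (ℓ + 1) :=
      add_le_add (hstar.abs_sub_update_zero_le hℓ (hb _) hx₀ hK hx)
        (hstar.abs_sub_update_zero_le hℓ (hb _) (finite_support_update_zero hx₀ _) hK
          (abs_update_zero_le hx _))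
    _ = _ := by ring

lemma StarCondition.abs_sub_truncSeq_zero_le (hstar : StarCondition H ℓ b) (hℓ : 0 ≤ ℓ)
    (hb : 0 ≤ b 0) (Y : ℤ → Ω → ℝ) (n : ℤ) (ω : Ω) :
    |H (truncSeq Y n 0 ω) - H 0| ≤ b 0 * localMax Y n 0 ω ^ (ℓ + 1) := by
  have hzero : update (truncSeq Y n 0 ω) 0 0 = 0 := by
    funext j
    by_cases hj : j = 0 <;> simp [truncSeq, hj]
  rw [← hzero]
  exact hstar.abs_sub_update_zero_le hℓ hb (finite_support_truncSeq ..) (one_le_localMax ..)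
    (abs_truncSeq_le_localMax Y n 0 ω le_rfl)

end TruncationIncrements

section Moments

variable {Ω : Type*} [MeasurableSpace Ω] {μ : Measure Ω} {Y : ℤ → Ω → ℝ}

lemma IsStrictlyStationary.lintegral_comp_eq (hmeas : ∀ t, Measurable (Y t))
    (hstat : IsStrictlyStationary μ Y) (t : ℤ) {g : ℝ → ℝ≥0∞} (hg : Measurable g) :
    ∫⁻ ω, g (Y t ω) ∂μ = ∫⁻ ω, g (Y 0 ω) ∂μ := by
  have h := hstat.map_eq_of_fintype hmeas (fun _ : Unit => 0) t
  simp only [zero_add] at h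
  have hG : Measurable fun v : Unit → ℝ => g (v ()) := hg.comp (measurable_pi_apply ())
  have h' := congrArg (fun ν => ∫⁻ v, g (v ()) ∂ν) h
  rwa [lintegral_map hG (by fun_prop), lintegral_map hG (by fun_prop)] at h'

lemma measurable_localMax (hmeas : ∀ t, Measurable (Y t)) (n : ℤ) (I : ℕ) :
    Measurable (localMax Y n I) := by
  have h : localMax Y n I = fun ω => max 1
      ((Finset.Icc (-(I : ℤ)) I).sup' (Finset.nonempty_Icc.2 (neg_le_self I.cast_nonneg))
        (fun j ω => |Y (n - j) ω|) ω) := by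
    funext ω; simp [localMax, Finset.sup'_apply]
  rw [h]
  exact measurable_const.max (Finset.measurable_sup' _ fun j _ => (hmeas _).abs)

lemma lintegral_localMax_rpow_le (hmeas : ∀ t, Measurable (Y t))
    (hstat : IsStrictlyStationary μ Y) [IsProbabilityMeasure μ] (q : ℝ) (n : ℤ) (I : ℕ) :
    ∫⁻ ω, ENNReal.ofReal (localMax Y n I ω ^ q) ∂μ
      ≤ 1 + (2 * I + 1 : ℕ) * ∫⁻ ω, ENNReal.ofReal (|Y 0 ω| ^ q) ∂μ := by
  have hg : Measurable fun a : ℝ => ENNReal.ofReal (|a| ^ q) := by fun_prop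
  calc ∫⁻ ω, ENNReal.ofReal (localMax Y n I ω ^ q) ∂μ
      ≤ ∫⁻ ω, 1 + ∑ j ∈ Finset.Icc (-(I : ℤ)) I, ENNReal.ofReal (|Y (n - j) ω| ^ q) ∂μ := by
        refine lintegral_mono fun ω => ?_
        rw [← ENNReal.ofReal_one, ← ENNReal.ofReal_sum_of_nonneg fun j _ => by positivity,
          ← ENNReal.ofReal_add zero_le_one (Finset.sum_nonneg fun j _ => by positivity)]
        exact ENNReal.ofReal_le_ofReal (localMax_rpow_le Y n I ω q)
    _ = 1 + ∑ j ∈ Finset.Icc (-(I : ℤ)) I, ∫⁻ ω, ENNReal.ofReal (|Y (n - j) ω| ^ q) ∂μ := by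
        rw [lintegral_add_left measurable_const, lintegral_finsetSum _ fun j _ => by fun_prop]
        simp
    _ = 1 + (2 * I + 1 : ℕ) * ∫⁻ ω, ENNReal.ofReal (|Y 0 ω| ^ q) ∂μ := by
        simp_rw [hstat.lintegral_comp_eq hmeas _ hg, Finset.sum_const, nsmul_eq_mul,
          Int.card_Icc]
        congr
        omega

lemma eLpNorm_rpow_le_lintegral_rpow [IsProbabilityMeasure μ] {g : Ω → ℝ} (hg : ∀ ω, 1 ≤ g ω)
    {r m q : ℝ} (hm : 1 ≤ m) (hq : 0 ≤ q) (hrm : r * m ≤ q) :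
    eLpNorm (fun ω => g ω ^ r) (ENNReal.ofReal m) μ ≤ ∫⁻ ω, ENNReal.ofReal (g ω ^ q) ∂μ := by
  have hm₀ : 0 < m := zero_lt_one.trans_le hm
  have hpt : ∀ ω, ‖g ω ^ r‖ₑ ^ m ≤ ENNReal.ofReal (g ω ^ q) := fun ω => by
    have hg₀ : 0 ≤ g ω := zero_le_one.trans (hg ω)
    rw [Real.enorm_eq_ofReal (by positivity), ENNReal.ofReal_rpow_of_nonneg (by positivity) hm₀.le,
      ← Real.rpow_mul hg₀]
    exact ENNReal.ofReal_le_ofReal (Real.rpow_le_rpow_of_exponent_le (hg ω) hrm)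
  have hone : 1 ≤ ∫⁻ ω, ENNReal.ofReal (g ω ^ q) ∂μ := by
    calc (1 : ℝ≥0∞) = ∫⁻ _, 1 ∂μ := by simp
      _ ≤ _ := lintegral_mono fun ω => by
        simpa using ENNReal.ofReal_le_ofReal (Real.one_le_rpow (hg ω) hq)
  rw [eLpNorm_eq_lintegral_rpow_enorm_toReal (by simpa using hm₀) ENNReal.ofReal_ne_top,
    ENNReal.toReal_ofReal hm₀.le]
  calc (∫⁻ ω, ‖g ω ^ r‖ₑ ^ m ∂μ) ^ (1 / m)
      ≤ (∫⁻ ω, ENNReal.ofReal (g ω ^ q) ∂μ) ^ (1 / m) := by gcongr; exact hpt _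
    _ ≤ (∫⁻ ω, ENNReal.ofReal (g ω ^ q) ∂μ) ^ (1 : ℝ) :=
        ENNReal.rpow_le_rpow_of_exponent_le hone (by rw [div_le_one hm₀]; exact hm)
    _ = _ := ENNReal.rpow_one _

end Moments

section Shells

variable {b : ℤ → ℝ}

lemma summable_shell_weights (hL : Summable fun j : ℤ => |(j : ℝ)| * b j) :
    Summable fun I : ℕ => (b ((I : ℤ) + 1) + b (-((I : ℤ) + 1))) * ((I + 1 : ℕ) : ℝ) := by
  have h₁ := hL.comp_injective (i := fun I : ℕ => (I : ℤ) + 1) fun a c h => by simpa using h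
  have h₂ := hL.comp_injective (i := fun I : ℕ => -((I : ℤ) + 1)) fun a c h => by simpa using h
  refine (h₁.add h₂).congr fun I => ?_
  have habs : |((I : ℝ) + 1)| = (I : ℝ) + 1 := abs_of_nonneg (by positivity)
  simp only [comp_apply, Int.cast_neg, Int.cast_add, Int.cast_natCast, Int.cast_one,
    abs_neg, habs]
  push_cast
  ring

lemma tsum_shell_weights_ne_top (hb : ∀ s, 0 ≤ b s)
    (hL : Summable fun j : ℤ => |(j : ℝ)| * b j) {C : ℝ≥0∞} (hC : C ≠ ∞) :
    ∑' I : ℕ, ENNReal.ofReal (b ((I : ℤ) + 1) + b (-((I : ℤ) + 1)))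
      * (1 + ((2 * (I + 1) + 1 : ℕ) : ℝ≥0∞) * C) ≠ ∞ := by
  have hle : ∀ I : ℕ, ENNReal.ofReal (b ((I : ℤ) + 1) + b (-((I : ℤ) + 1)))
      * (1 + ((2 * (I + 1) + 1 : ℕ) : ℝ≥0∞) * C)
      ≤ ENNReal.ofReal ((b ((I : ℤ) + 1) + b (-((I : ℤ) + 1))) * ((I + 1 : ℕ) : ℝ))
        * (3 * (1 + C)) := by
    intro I
    rw [ENNReal.ofReal_mul (add_nonneg (hb _) (hb _)), ENNReal.ofReal_natCast, mul_assoc]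
    gcongr
    calc 1 + ((2 * (I + 1) + 1 : ℕ) : ℝ≥0∞) * C
        ≤ ((3 * (I + 1) : ℕ) : ℝ≥0∞) + ((3 * (I + 1) : ℕ) : ℝ≥0∞) * C := by
          gcongr <;> norm_cast <;> omega
      _ = _ := by push_cast; ring
  refine ne_top_of_le_ne_top ?_ (ENNReal.tsum_le_tsum hle)
  rw [ENNReal.tsum_mul_right, ← ENNReal.ofReal_tsum_of_nonneg
    (fun I => mul_nonneg (add_nonneg (hb _) (hb _)) (Nat.cast_nonneg _))
    (summable_shell_weights hL)]
  exact ENNReal.mul_ne_top ENNReal.ofReal_ne_top (by finiteness)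

end Shells

section TruncatedShifts

variable {Ω : Type*} [MeasurableSpace Ω] {μ : Measure Ω} [IsProbabilityMeasure μ]
  {Y : ℤ → Ω → ℝ} {H : (ℤ → ℝ) → ℝ} {ℓ m m' : ℝ} {b : ℤ → ℝ}

lemma StarCondition.eLpNorm_truncSeq_succ_sub_le (hstar : StarCondition H ℓ b)
    (hmeas : ∀ t, Measurable (Y t)) (hstat : IsStrictlyStationary μ Y) (hℓ : 0 ≤ ℓ)
    (hb : ∀ s, 0 ≤ b s) (hm : 1 ≤ m) (hm' : (ℓ + 1) * m ≤ m') (n : ℤ) (I : ℕ) :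
    eLpNorm (fun ω => H (truncSeq Y n (I + 1) ω) - H (truncSeq Y n I ω)) (ENNReal.ofReal m) μ
      ≤ ENNReal.ofReal (b ((I : ℤ) + 1) + b (-((I : ℤ) + 1)))
        * (1 + ((2 * (I + 1) + 1 : ℕ) : ℝ≥0∞) * ∫⁻ ω, ENNReal.ofReal (|Y 0 ω| ^ m') ∂μ) := by
  have hβ : 0 ≤ b ((I : ℤ) + 1) + b (-((I : ℤ) + 1)) := add_nonneg (hb _) (hb _)
  calc _ ≤ eLpNorm ((b ((I : ℤ) + 1) + b (-((I : ℤ) + 1)))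
          • fun ω => localMax Y n (I + 1) ω ^ (ℓ + 1)) (ENNReal.ofReal m) μ :=
        eLpNorm_mono_real fun ω => hstar.abs_sub_truncSeq_succ_le hℓ hb Y n I ω
    _ = _ * eLpNorm (fun ω => localMax Y n (I + 1) ω ^ (ℓ + 1)) (ENNReal.ofReal m) μ := by
        rw [eLpNorm_const_smul, Real.enorm_eq_ofReal hβ]
    _ ≤ _ := by
        gcongr
        exact (eLpNorm_rpow_le_lintegral_rpow (one_le_localMax Y n _) hm (by nlinarith) hm').trans
          (lintegral_localMax_rpow_le hmeas hstat m' n (I + 1))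

lemma StarCondition.memLp_truncSeq_zero (hstar : StarCondition H ℓ b)
    (hmeas : ∀ t, Measurable (Y t)) (hstat : IsStrictlyStationary μ Y) (hH : Measurable H)
    (hℓ : 0 ≤ ℓ) (hb : 0 ≤ b 0) (hm : 1 ≤ m) (hm' : (ℓ + 1) * m ≤ m')
    (hmom : ∫⁻ ω, ENNReal.ofReal (|Y 0 ω| ^ m') ∂μ ≠ ∞) (n : ℤ) :
    MemLp (fun ω => H (truncSeq Y n 0 ω)) (ENNReal.ofReal m) μ := by
  have hK : MemLp (fun ω => localMax Y n 0 ω ^ (ℓ + 1)) (ENNReal.ofReal m) μ := by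
    refine ⟨((measurable_localMax hmeas n 0).pow_const _).aestronglyMeasurable, ?_⟩
    refine ((eLpNorm_rpow_le_lintegral_rpow (one_le_localMax Y n 0) hm (by nlinarith) hm').trans
      (lintegral_localMax_rpow_le hmeas hstat m' n 0)).trans_lt ?_
    finiteness
  have hdiff : MemLp (fun ω => H (truncSeq Y n 0 ω) - H 0) (ENNReal.ofReal m) μ :=
    (hK.const_mul (b 0)).of_le
      ((hH.comp (measurable_truncSeq hmeas n 0)).sub measurable_const).aestronglyMeasurable
      (ae_of_all _ fun ω => by
        have hK₀ : 0 ≤ localMax Y n 0 ω ^ (ℓ + 1) :=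
          Real.rpow_nonneg (zero_le_one.trans (one_le_localMax Y n 0 ω)) _
        simpa [abs_of_nonneg hb, abs_of_nonneg hK₀] using
          hstar.abs_sub_truncSeq_zero_le hℓ hb Y n ω)
  convert hdiff.add (memLp_const (H 0)) using 1
  funext ω
  simp

end TruncatedShifts

theorem bernoulli_shift_exists_nonlipschitz
    {Ω : Type*} [MeasurableSpace Ω] (μ : Measure Ω) [IsProbabilityMeasure μ]
    (Y : ℤ → Ω → ℝ) (hmeas : ∀ t, Measurable (Y t))
    (hstat : IsStrictlyStationary μ Y)
    (H : (ℤ → ℝ) → ℝ) (hH : Measurable H)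
    (ℓ : ℝ) (hℓ : 0 < ℓ) (bw : ℤ → ℝ) (hbw : ∀ s, 0 ≤ bw s)
    (hstar : StarCondition H ℓ bw)
    (hL : Summable (fun j : ℤ => |(j : ℝ)| * bw j))
    (m m' : ℝ) (hm : 1 ≤ m) (hm' : (ℓ + 1) * m ≤ m')
    (hmom : Integrable (fun ω => |Y 0 ω| ^ m') μ) :
    ∃ X : ℤ → Ω → ℝ,
      IsBernoulliShift μ Y H (ENNReal.ofReal m) X ∧
      IsStrictlyStationary μ X := by
  have hC : ∫⁻ ω, ENNReal.ofReal (|Y 0 ω| ^ m') ∂μ ≠ ∞ := hmom.lintegral_lt_top.ne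
  have hp : 1 ≤ ENNReal.ofReal m := by simpa using ENNReal.ofReal_le_ofReal hm
  have hGm : ∀ n I, Measurable fun ω => H (truncSeq Y n I ω) := fun n I =>
    hH.comp (measurable_truncSeq hmeas n I)
  have hsum : ∀ n : ℤ, ∑' I : ℕ, eLpNorm (fun ω => H (truncSeq Y n (I + 1) ω)
      - H (truncSeq Y n I ω)) (ENNReal.ofReal m) μ ≠ ∞ := fun n =>
    ne_top_of_le_ne_top (tsum_shell_weights_ne_top hbw hL hC) (ENNReal.tsum_le_tsum fun I =>
      hstar.eLpNorm_truncSeq_succ_sub_le hmeas hstat hℓ.le hbw hm hm' n I)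
  choose X hXp hXae hXlim using fun n => exists_tendsto_of_tsum_eLpNorm_sub_ne_top
    (hstar.memLp_truncSeq_zero hmeas hstat hH hℓ.le (hbw 0) hm hm' hC n)
    (fun I => (hGm n I).aestronglyMeasurable) hp (hsum n)
  refine ⟨X, fun n => ⟨hXp n, hXlim n⟩, ?_⟩
  exact isStrictlyStationary_of_tendsto_ae (G := fun I n ω => H (truncSeq Y n I ω))
    (fun I => hstat.comp_truncSeq hmeas hH I) (fun I n => (hGm n I).aemeasurable)
    (fun n => (hXp n).aestronglyMeasurable.aemeasurable) hXae
end
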